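/- arXiv:1409.2532 — 4 statements merged into one kernel-verified Lean document; each statement's English description precedes it below -/
import Mathlib

section
/- For every α ∈ ℤ^{m|n} and every i ∈ ℤ: if ẽ_i(α) ≠ ∅, then the reduced i-signature of ẽ_i(α) is obtained from the reduced i-signature of α by replacing its leftmost − by a +; dually, if f̃_i(α) ≠ ∅, then the reduced i-signature of f̃_i(α) is obtained from the reduced i-signature of α by replacing its rightmost + by a −. -/
/-- A symbol of an `i`-signature: `+`, `-`, or `0`. -/
inductive Sign : Type
  | plus : Sign
  | minus : Sign
  | zero : Sign
  deriving DecidableEq, Repr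

/-- If the list starts with `0* +`, replace that `+` by `0` (else `none`). -/
def eatPlus : List Sign → Option (List Sign)
  | [] => none
  | Sign.plus :: rest => some (Sign.zero :: rest)
  | Sign.zero :: rest => (eatPlus rest).map (Sign.zero :: ·)
  | Sign.minus :: _ => none

/-- Cancel the leftmost pattern `- 0* +` (replacing both symbols by `0`), if any. -/
def cancelOne : List Sign → Option (List Sign)
  | [] => none
  | Sign.minus :: rest =>
    match eatPlus rest with
    | some rest' => some (Sign.zero :: rest')
    | none => (cancelOne rest).map (Sign.minus :: ·)
  | s :: rest => (cancelOne rest).map (s :: ·)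

/-- Iterate cancellation at most `k` times. -/
def reduceIter : ℕ → List Sign → List Sign
  | 0, l => l
  | k + 1, l =>
    match cancelOne l with
    | none => l
    | some l' => reduceIter k l'

/-- The reduced signature: cancel `- 0* +` patterns until none remains
(`l.length` iterations always suffice). -/
def reduceSig (l : List Sign) : List Sign := reduceIter l.length l

/-- The `i`-signature symbol of `α ∈ ℤ^{m|n}` at position `j` (0-indexed;
positions `j < m` are left of the separator). -/
def signOf (m n : ℕ) (i : ℤ) (α : Fin (m + n) → ℤ) (j : Fin (m + n)) : Sign :=
  if (j : ℕ) < m then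
    if α j = i then Sign.plus else if α j = i + 1 then Sign.minus else Sign.zero
  else
    if α j = i + 1 then Sign.plus else if α j = i then Sign.minus else Sign.zero

/-- The `i`-signature of `α` as a list of length `m + n`. -/
def sigList (m n : ℕ) (i : ℤ) (α : Fin (m + n) → ℤ) : List Sign :=
  List.ofFn (signOf m n i α)

/-- The reduced `i`-signature of `α`. -/
def redSig (m n : ℕ) (i : ℤ) (α : Fin (m + n) → ℤ) : List Sign :=
  reduceSig (sigList m n i α)

/-- `ε_i(α)`: the number of `-` in the reduced `i`-signature. -/
def epsilonNum (m n : ℕ) (i : ℤ) (α : Fin (m + n) → ℤ) : ℕ :=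
  (redSig m n i α).count Sign.minus

/-- `φ_i(α)`: the number of `+` in the reduced `i`-signature. -/
def phiNum (m n : ℕ) (i : ℤ) (α : Fin (m + n) → ℤ) : ℕ :=
  (redSig m n i α).count Sign.plus

/-- `c_j ∈ ℤ^{m|n}`: `+1` at position `j` if `j` is left of the separator,
`-1` at position `j` otherwise, and `0` elsewhere (0-indexed). -/
def cvec (m n : ℕ) (j : ℕ) : Fin (m + n) → ℤ :=
  fun k => if (k : ℕ) = j then (if j < m then 1 else -1) else 0

/-- The index of the last occurrence of `s` in `l` (junk if `s ∉ l`). -/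
def lastIdxOf (s : Sign) (l : List Sign) : ℕ :=
  l.length - 1 - l.reverse.idxOf s

/-- The crystal operator `ẽ_i`: subtract `c_j` at the position `j` of the
leftmost `-` of the reduced `i`-signature; `none` if there is no `-`. -/
def etilde (m n : ℕ) (i : ℤ) (α : Fin (m + n) → ℤ) : Option (Fin (m + n) → ℤ) :=
  if Sign.minus ∈ redSig m n i α then
    some (fun k => α k - cvec m n ((redSig m n i α).idxOf Sign.minus) k)
  else none

/-- The crystal operator `f̃_i`: add `c_j` at the position `j` of the
rightmost `+` of the reduced `i`-signature; `none` if there is no `+`. -/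
def ftilde (m n : ℕ) (i : ℤ) (α : Fin (m + n) → ℤ) : Option (Fin (m + n) → ℤ) :=
  if Sign.plus ∈ redSig m n i α then
    some (fun k => α k + cvec m n (lastIdxOf Sign.plus (redSig m n i α)) k)
  else none

/-!
Cancelling a pair `- 0* +` is a rewriting step on signatures, and `reduceSig` computes a normal
form. Two different cancellations act on disjoint positions and commute, so by Church–Rosser the
normal form is unique. A nonzero letter of `reduceSig l` is never touched on the way from `l`, so
the same cancellations lead from `l.set j t` to `(reduceSig l).set j t`. If `j` is the leftmost
`-` and `t = +`, or the rightmost `+` and `t = -`, this list still has no `-` left of a `+`, so it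
is the normal form of `l.set j t`. Finally, `ẽ_i` and `f̃_i` change the `i`-signature of `α`
exactly by such a replacement.
-/

structure CancelRedex (l : List Sign) (p q : ℕ) : Prop where
  lt : p < q
  getElem?_left : l[p]? = some .minus
  getElem?_right : l[q]? = some .plus
  getElem?_between : ∀ r, p < r → r < q → l[r]? = some .zero

def CancelStep (l l' : List Sign) : Prop :=
  ∃ p q, CancelRedex l p q ∧ l' = (l.set p .zero).set q .zero

def IsReducedSig (l : List Sign) : Prop :=
  ∀ p q : ℕ, p < q → l[p]? = some Sign.minus → l[q]? ≠ some Sign.plus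

namespace CancelRedex

variable {l : List Sign} {p q : ℕ}

theorem cons (h : CancelRedex l p q) (s : Sign) : CancelRedex (s :: l) (p + 1) (q + 1) := by
  obtain ⟨hpq, hp, hq, hz⟩ := h
  refine ⟨by omega, hp, hq, fun r h₁ h₂ => ?_⟩
  obtain ⟨r, rfl⟩ : ∃ r', r = r' + 1 := ⟨r - 1, by omega⟩
  exact hz r (by omega) (by omega)

theorem set_of_lt_or_lt (h : CancelRedex l p q) {u : ℕ} (hu : u < p ∨ q < u) (s : Sign) :
    CancelRedex (l.set u s) p q := by
  obtain ⟨hpq, hp, hq, hz⟩ := h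
  refine ⟨hpq, ?_, ?_, fun r h₁ h₂ => ?_⟩ <;> rw [List.getElem?_set_ne (by omega)]
  exacts [hp, hq, hz r h₁ h₂]

theorem lt_or_lt_of_ne_zero (h : CancelRedex l p q) {j : ℕ} {s : Sign} (hs : s ≠ .zero)
    (hj : ((l.set p .zero).set q .zero)[j]? = some s) : j < p ∨ q < j := by
  by_contra! hpjq
  have := h.getElem?_between j
  simp only [List.getElem?_set] at hj
  split_ifs at hj <;> simp_all; omega

theorem right_unique (h : CancelRedex l p q) {q' : ℕ} (h' : CancelRedex l p q') : q = q' := by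
  rcases lt_trichotomy q q' with hlt | heq | hgt
  · simpa [h.getElem?_right] using h'.getElem?_between q h.lt hlt
  · exact heq
  · simpa [h'.getElem?_right] using h.getElem?_between q' h'.lt hgt

theorem right_lt_of_lt (h : CancelRedex l p q) {p' q' : ℕ} (h' : CancelRedex l p' q')
    (hp : p < p') : q < p' := by
  by_contra! hle
  rcases hle.lt_or_eq with hlt | rfl
  · simpa [h'.getElem?_left] using h.getElem?_between p' hp hlt
  · simpa [h'.getElem?_left] using h.getElem?_right

end CancelRedex

namespace CancelStep

variable {a b : List Sign}

theorem cons (h : CancelStep a b) (s : Sign) : CancelStep (s :: a) (s :: b) := by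
  obtain ⟨p, q, hr, rfl⟩ := h
  exact ⟨p + 1, q + 1, hr.cons s, rfl⟩

theorem getElem?_of_ne_zero (h : CancelStep a b) {j : ℕ} {s : Sign} (hs : s ≠ .zero)
    (hb : b[j]? = some s) : a[j]? = some s := by
  obtain ⟨p, q, hr, rfl⟩ := h
  have := hr.lt_or_lt_of_ne_zero hs hb
  have := hr.lt
  rwa [List.getElem?_set_ne (by omega), List.getElem?_set_ne (by omega)] at hb

theorem set (h : CancelStep a b) {j : ℕ} {s : Sign} (hs : s ≠ .zero) (hb : b[j]? = some s)
    (t : Sign) : CancelStep (a.set j t) (b.set j t) := by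
  obtain ⟨p, q, hr, rfl⟩ := h
  have hj := hr.lt_or_lt_of_ne_zero hs hb
  have := hr.lt
  refine ⟨p, q, hr.set_of_lt_or_lt hj t, ?_⟩
  rw [List.set_comm _ _ (show j ≠ p by omega), List.set_comm _ _ (show j ≠ q by omega)]

theorem getElem?_of_reflTransGen (h : Relation.ReflTransGen CancelStep a b) {j : ℕ} {s : Sign}
    (hs : s ≠ .zero) (hb : b[j]? = some s) : a[j]? = some s := by
  induction h with
  | refl => exact hb
  | tail _ hstep ih => exact ih (hstep.getElem?_of_ne_zero hs hb)

theorem reflTransGen_set (h : Relation.ReflTransGen CancelStep a b) {j : ℕ} {s : Sign}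
    (hs : s ≠ .zero) (hb : b[j]? = some s) (t : Sign) :
    Relation.ReflTransGen CancelStep (a.set j t) (b.set j t) := by
  induction h with
  | refl => exact .refl
  | tail _ hstep ih => exact (ih (hstep.getElem?_of_ne_zero hs hb)).tail (hstep.set hs hb t)

theorem count_minus (h : CancelStep a b) : b.count Sign.minus + 1 = a.count Sign.minus := by
  obtain ⟨p, q, ⟨hpq, hp, hq, -⟩, rfl⟩ := h
  obtain ⟨hp, hp'⟩ := List.getElem?_eq_some_iff.1 hp
  obtain ⟨hq, hq'⟩ := List.getElem?_eq_some_iff.1 hq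
  rw [List.count_set (by simpa), List.count_set hp]
  have : 0 < a.count Sign.minus := List.count_pos_iff.2 (hp' ▸ List.getElem_mem hp)
  simp [hp', hq', List.getElem_set_ne hpq.ne]
  omega

end CancelStep

theorem cancelStep_joinable_of_lt {a : List Sign} {p q p' q' : ℕ} (h : CancelRedex a p q)
    (h' : CancelRedex a p' q') (hp : p < p') :
    ∃ d, CancelStep ((a.set p .zero).set q .zero) d ∧
      CancelStep ((a.set p' .zero).set q' .zero) d := by
  have := h.right_lt_of_lt h' hp
  have := h.lt
  have := h'.lt
  refine ⟨(((a.set p .zero).set q .zero).set p' .zero).set q' .zero,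
    ⟨p', q', (h'.set_of_lt_or_lt (by omega) _).set_of_lt_or_lt (by omega) _, rfl⟩,
    ⟨p, q, (h.set_of_lt_or_lt (by omega) _).set_of_lt_or_lt (by omega) _, ?_⟩⟩
  rw [List.set_comm _ _ (show q' ≠ p by omega), List.set_comm _ _ (show p' ≠ p by omega),
    List.set_comm _ _ (show q' ≠ q by omega), List.set_comm _ _ (show p' ≠ q by omega)]

theorem cancelStep_diamond (a b c : List Sign) (hb : CancelStep a b) (hc : CancelStep a c) :
    ∃ d, Relation.ReflGen CancelStep b d ∧ Relation.ReflTransGen CancelStep c d := by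
  obtain ⟨p, q, hr, rfl⟩ := hb
  obtain ⟨p', q', hr', rfl⟩ := hc
  rcases lt_trichotomy p p' with hlt | rfl | hgt
  · obtain ⟨d, hbd, hcd⟩ := cancelStep_joinable_of_lt hr hr' hlt
    exact ⟨d, .single hbd, .single hcd⟩
  · obtain rfl := hr.right_unique hr'
    exact ⟨_, .refl, .refl⟩
  · obtain ⟨d, hcd, hbd⟩ := cancelStep_joinable_of_lt hr' hr hgt
    exact ⟨d, .single hbd, .single hcd⟩

theorem isReducedSig_cons {s : Sign} {l : List Sign} :
    IsReducedSig (s :: l) ↔ IsReducedSig l ∧ (s = Sign.minus → Sign.plus ∉ l) := by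
  constructor
  · intro h
    refine ⟨fun p q hpq => h (p + 1) (q + 1) (by omega), fun hs hl => ?_⟩
    obtain ⟨q, hq, hq'⟩ := List.getElem_of_mem hl
    exact h 0 (q + 1) (by omega) (by simp [hs]) (by simp [hq, hq'])
  · rintro ⟨h, hs⟩ (_ | p) (_ | q) hpq hp hq
    · omega
    · exact hs (by simpa using hp) (List.mem_of_getElem? hq)
    · omega
    · exact h p q (by omega) hp hq

namespace IsReducedSig

variable {l : List Sign}

theorem not_cancelStep (h : IsReducedSig l) {l' : List Sign} : ¬ CancelStep l l' := by
  rintro ⟨p, q, ⟨hpq, hp, hq, -⟩, -⟩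
  exact h p q hpq hp hq

theorem eq_of_reflTransGen (h : IsReducedSig l) {l' : List Sign}
    (hl : Relation.ReflTransGen CancelStep l l') : l' = l := by
  rcases hl.cases_head with rfl | ⟨c, hc, -⟩
  · rfl
  · exact absurd hc h.not_cancelStep

theorem eq_of_reflTransGen_of_reflTransGen {a b : List Sign} (ha : IsReducedSig a)
    (hb : IsReducedSig b) (hla : Relation.ReflTransGen CancelStep l a)
    (hlb : Relation.ReflTransGen CancelStep l b) : a = b := by
  obtain ⟨d, had, hbd⟩ := Relation.church_rosser cancelStep_diamond hla hlb
  rw [← ha.eq_of_reflTransGen had, ← hb.eq_of_reflTransGen hbd]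

theorem set_plus (h : IsReducedSig l) {j : ℕ} (hj : ∀ p < j, l[p]? ≠ some Sign.minus) :
    IsReducedSig (l.set j Sign.plus) := by
  intro p q hpq hp hq
  rw [List.getElem?_set] at hp hq
  split_ifs at hp hq <;> first | exact h p q hpq hp hq | simp_all

theorem set_minus (h : IsReducedSig l) {j : ℕ} (hj : ∀ q, j < q → l[q]? ≠ some Sign.plus) :
    IsReducedSig (l.set j Sign.minus) := by
  intro p q hpq hp hq
  rw [List.getElem?_set] at hp hq
  split_ifs at hp hq <;> first | exact h p q hpq hp hq | simp_all

end IsReducedSig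

theorem eatPlus_eq_some : ∀ {l l' : List Sign}, eatPlus l = some l' →
    ∃ q, l[q]? = some Sign.plus ∧ (∀ r < q, l[r]? = some Sign.zero) ∧ l' = l.set q Sign.zero
  | Sign.plus :: rest, _, h => ⟨0, rfl, by simp, by simp_all [eatPlus]⟩
  | Sign.zero :: rest, l', h => by
    simp only [eatPlus, Option.map_eq_some_iff] at h
    obtain ⟨r', hr', rfl⟩ := h
    obtain ⟨q, hq, hz, rfl⟩ := eatPlus_eq_some hr'
    refine ⟨q + 1, hq, fun r hr => ?_, rfl⟩
    cases r
    · rfl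
    · exact hz _ (by omega)
  | [], _, h | Sign.minus :: _, _, h => by simp [eatPlus] at h

theorem plus_not_mem_of_eatPlus_eq_none : ∀ {l : List Sign}, eatPlus l = none →
    IsReducedSig l → Sign.plus ∉ l
  | [], _, _ => List.not_mem_nil
  | Sign.plus :: _, h, _ => by simp [eatPlus] at h
  | Sign.minus :: _, _, hl => by simpa using (isReducedSig_cons.1 hl).2
  | Sign.zero :: rest, h, hl => by
    simp only [eatPlus, Option.map_eq_none_iff] at h
    simpa using plus_not_mem_of_eatPlus_eq_none h (isReducedSig_cons.1 hl).1

theorem cancelStep_of_cancelOne_eq_some : ∀ {l l' : List Sign}, cancelOne l = some l' →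
    CancelStep l l'
  | [], _, h => by simp [cancelOne] at h
  | Sign.minus :: rest, l', h => by
    rcases he : eatPlus rest with _ | rest'
    · simp only [cancelOne, he, Option.map_eq_some_iff] at h
      obtain ⟨r', hr', rfl⟩ := h
      exact (cancelStep_of_cancelOne_eq_some hr').cons _
    · simp only [cancelOne, he, Option.some.injEq] at h
      obtain ⟨q, hq, hz, rfl⟩ := eatPlus_eq_some he
      refine ⟨0, q + 1, ⟨by omega, rfl, hq, fun r h₁ h₂ => ?_⟩, by simp [← h]⟩
      obtain ⟨r, rfl⟩ : ∃ r', r = r' + 1 := ⟨r - 1, by omega⟩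
      exact hz r (by omega)
  | Sign.plus :: rest, l', h | Sign.zero :: rest, l', h => by
    simp only [cancelOne, Option.map_eq_some_iff] at h
    obtain ⟨r', hr', rfl⟩ := h
    exact (cancelStep_of_cancelOne_eq_some hr').cons _

theorem isReducedSig_of_cancelOne_eq_none : ∀ {l : List Sign}, cancelOne l = none →
    IsReducedSig l
  | [], _ => fun p q _ hp => by simp at hp
  | Sign.minus :: rest, h => by
    rcases he : eatPlus rest with _ | rest'
    · simp only [cancelOne, he, Option.map_eq_none_iff] at h
      have hr := isReducedSig_of_cancelOne_eq_none h
      exact isReducedSig_cons.2 ⟨hr, fun _ => plus_not_mem_of_eatPlus_eq_none he hr⟩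
    · simp [cancelOne, he] at h
  | Sign.plus :: rest, h | Sign.zero :: rest, h => by
    simp only [cancelOne, Option.map_eq_none_iff] at h
    exact isReducedSig_cons.2 ⟨isReducedSig_of_cancelOne_eq_none h, by simp⟩

theorem reduceIter_spec : ∀ (k : ℕ) (l : List Sign), l.count Sign.minus ≤ k →
    Relation.ReflTransGen CancelStep l (reduceIter k l) ∧ IsReducedSig (reduceIter k l)
  | 0, l, hk => by
    rcases h : cancelOne l with _ | l'
    · exact ⟨.refl, isReducedSig_of_cancelOne_eq_none h⟩
    · have := (cancelStep_of_cancelOne_eq_some h).count_minus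
      omega
  | k + 1, l, hk => by
    rcases h : cancelOne l with _ | l'
    · rw [reduceIter, h]
      exact ⟨.refl, isReducedSig_of_cancelOne_eq_none h⟩
    · rw [reduceIter, h]
      have hstep := cancelStep_of_cancelOne_eq_some h
      obtain ⟨h₁, h₂⟩ := reduceIter_spec k l' (by have := hstep.count_minus; omega)
      exact ⟨.head hstep h₁, h₂⟩

theorem reflTransGen_reduceSig (l : List Sign) : Relation.ReflTransGen CancelStep l (reduceSig l) :=
  (reduceIter_spec _ l List.count_le_length).1

theorem isReducedSig_reduceSig (l : List Sign) : IsReducedSig (reduceSig l) :=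
  (reduceIter_spec _ l List.count_le_length).2

theorem reduceSig_set {l : List Sign} {j : ℕ} {s t : Sign} (hs : s ≠ Sign.zero)
    (hj : (reduceSig l)[j]? = some s) (ht : IsReducedSig ((reduceSig l).set j t)) :
    reduceSig (l.set j t) = (reduceSig l).set j t :=
  (isReducedSig_reduceSig _).eq_of_reflTransGen_of_reflTransGen ht (reflTransGen_reduceSig _)
    (CancelStep.reflTransGen_set (reflTransGen_reduceSig l) hs hj t)

section Signature

variable {m n : ℕ} {i : ℤ} {α : Fin (m + n) → ℤ}

theorem sigList_eq_set {β : Fin (m + n) → ℤ} {j : Fin (m + n)} (h : ∀ k, k ≠ j → β k = α k) :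
    sigList m n i β = (sigList m n i α).set j (signOf m n i β j) := by
  refine List.ext_getElem (by simp [sigList]) fun k hk _ => ?_
  simp only [sigList, List.length_ofFn] at hk
  by_cases hkj : (j : ℕ) = k
  · subst hkj
    simp [sigList]
  · have : (⟨k, hk⟩ : Fin (m + n)) ≠ j := fun h => hkj (by simp [← h])
    simp [sigList, List.getElem_set_ne hkj, signOf, h _ this]

theorem cvec_of_ne {j : ℕ} {k : Fin (m + n)} (hk : (k : ℕ) ≠ j) : cvec m n j k = 0 := by
  simp [cvec, hk]

theorem signOf_sub_cvec {j : Fin (m + n)} (h : signOf m n i α j = Sign.minus) :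
    signOf m n i (fun k => α k - cvec m n j k) j = Sign.plus := by
  unfold signOf at *
  split_ifs at h ⊢ <;> simp_all [cvec] <;> omega

theorem signOf_add_cvec {j : Fin (m + n)} (h : signOf m n i α j = Sign.plus) :
    signOf m n i (fun k => α k + cvec m n j k) j = Sign.minus := by
  unfold signOf at *
  split_ifs at h ⊢ <;> simp_all [cvec] <;> omega

theorem sigList_sub_cvec {j : ℕ} {hj : j < m + n} (h : signOf m n i α ⟨j, hj⟩ = Sign.minus) :
    sigList m n i (fun k => α k - cvec m n j k) = (sigList m n i α).set j Sign.plus := by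
  rw [sigList_eq_set (α := α) (j := ⟨j, hj⟩)
    fun k hk => by simp [cvec_of_ne (Fin.val_injective.ne hk)], signOf_sub_cvec h]

theorem sigList_add_cvec {j : ℕ} {hj : j < m + n} (h : signOf m n i α ⟨j, hj⟩ = Sign.plus) :
    sigList m n i (fun k => α k + cvec m n j k) = (sigList m n i α).set j Sign.minus := by
  rw [sigList_eq_set (α := α) (j := ⟨j, hj⟩)
    fun k hk => by simp [cvec_of_ne (Fin.val_injective.ne hk)], signOf_add_cvec h]

theorem exists_signOf_eq_of_redSig {j : ℕ} {s : Sign} (hs : s ≠ Sign.zero)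
    (hj : (redSig m n i α)[j]? = some s) : ∃ hj : j < m + n, signOf m n i α ⟨j, hj⟩ = s := by
  simpa [sigList, List.getElem?_ofFn] using
    CancelStep.getElem?_of_reflTransGen (reflTransGen_reduceSig _) hs hj

theorem redSig_sub_cvec {j : ℕ} (hj : (redSig m n i α)[j]? = some Sign.minus)
    (hmin : ∀ p < j, (redSig m n i α)[p]? ≠ some Sign.minus) :
    redSig m n i (fun k => α k - cvec m n j k) = (redSig m n i α).set j Sign.plus := by
  obtain ⟨hjmn, hsig⟩ := exists_signOf_eq_of_redSig (by decide) hj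
  rw [redSig, sigList_sub_cvec hsig]
  exact reduceSig_set (by decide) hj ((isReducedSig_reduceSig _).set_plus hmin)

theorem redSig_add_cvec {j : ℕ} (hj : (redSig m n i α)[j]? = some Sign.plus)
    (hmax : ∀ q, j < q → (redSig m n i α)[q]? ≠ some Sign.plus) :
    redSig m n i (fun k => α k + cvec m n j k) = (redSig m n i α).set j Sign.minus := by
  obtain ⟨hjmn, hsig⟩ := exists_signOf_eq_of_redSig (by decide) hj
  rw [redSig, sigList_add_cvec hsig]
  exact reduceSig_set (by decide) hj ((isReducedSig_reduceSig _).set_minus hmax)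

end Signature

theorem getElem?_ne_of_lt_idxOf {β : Type*} [BEq β] [LawfulBEq β] {l : List β} {a : β} {p : ℕ}
    (hp : p < l.idxOf a) : l[p]? ≠ some a := by
  intro h
  obtain ⟨hp', h⟩ := List.getElem?_eq_some_iff.1 h
  simpa [h] using List.not_of_lt_findIdx hp

theorem getElem?_lastIdxOf {l : List Sign} {s : Sign} (h : s ∈ l) :
    l[lastIdxOf s l]? = some s := by
  have hlt := List.idxOf_lt_length_iff.2 (List.mem_reverse.2 h)
  rw [List.length_reverse] at hlt
  rw [← List.getElem?_idxOf (List.mem_reverse.2 h),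
    List.getElem?_reverse' (j := lastIdxOf s l) (by unfold lastIdxOf; omega)]

theorem getElem?_ne_of_lastIdxOf_lt {l : List Sign} {s : Sign} {q : ℕ}
    (hq : lastIdxOf s l < q) : l[q]? ≠ some s := by
  rcases lt_or_ge q l.length with hql | hql
  · have := (List.idxOf_le_length (l := l.reverse) (a := s)).trans_eq List.length_reverse
    rw [lastIdxOf] at hq
    rw [← List.getElem?_reverse' (i := l.length - 1 - q) (by omega)]
    exact getElem?_ne_of_lt_idxOf (by omega)
  · simp [List.getElem?_eq_none hql]

theorem reduced_signature_of_crystal_operator_general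
    (m n : ℕ) (i : ℤ) (α : Fin (m + n) → ℤ) :
    (∀ β : Fin (m + n) → ℤ, etilde m n i α = some β →
      redSig m n i β =
        (redSig m n i α).set ((redSig m n i α).idxOf Sign.minus) Sign.plus) ∧
    (∀ β : Fin (m + n) → ℤ, ftilde m n i α = some β →
      redSig m n i β =
        (redSig m n i α).set (lastIdxOf Sign.plus (redSig m n i α)) Sign.minus) := by
  refine ⟨fun β hβ => ?_, fun β hβ => ?_⟩
  · rw [etilde] at hβ
    split_ifs at hβ with hmem
    cases hβ
    exact redSig_sub_cvec (List.getElem?_idxOf hmem) fun _ => getElem?_ne_of_lt_idxOf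
  · rw [ftilde] at hβ
    split_ifs at hβ with hmem
    cases hβ
    exact redSig_add_cvec (getElem?_lastIdxOf hmem) fun _ => getElem?_ne_of_lastIdxOf_lt

/-- If `ẽ_i(α) ≠ ∅`, then the reduced `i`-signature of `ẽ_i(α)` is
obtained from the reduced `i`-signature of `α` by replacing its leftmost `-` by a `+`;
dually, if `f̃_i(α) ≠ ∅`, then the reduced `i`-signature of `f̃_i(α)` is obtained from
that of `α` by replacing its rightmost `+` by a `-`. -/
theorem reduced_signature_of_crystal_operator
    (m n : ℕ) (hm : 1 ≤ m) (hn : 1 ≤ n) (i : ℤ) (α : Fin (m + n) → ℤ) :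
    (∀ β : Fin (m + n) → ℤ, etilde m n i α = some β →
      redSig m n i β =
        (redSig m n i α).set ((redSig m n i α).idxOf Sign.minus) Sign.plus) ∧
    (∀ β : Fin (m + n) → ℤ, ftilde m n i α = some β →
      redSig m n i β =
        (redSig m n i α).set (lastIdxOf Sign.plus (redSig m n i α)) Sign.minus) :=
  reduced_signature_of_crystal_operator_general m n i α
end

section
/- Let α ∈ ℤ^{m|n} be antidominant. Then for every x ∈ ℤ: φ_x(α) = α_0(x) + max(α_1(x+1) − α_0(x+1), 0) and ε_x(α) = α_1(x) + max(α_0(x+1) − α_1(x+1), 0). (This is the explicit computation of reduced signatures of antidominant tuples used in the proof of Lemma 4.4.) -/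
/-- `α_0(x)`: the number of entries equal to `x` left of the separator. -/
def count0 (m n : ℕ) (α : Fin (m + n) → ℤ) (x : ℤ) : ℕ :=
  (Finset.univ.filter fun j : Fin (m + n) => (j : ℕ) < m ∧ α j = x).card

/-- `α_1(x)`: the number of entries equal to `x` right of the separator. -/
def count1 (m n : ℕ) (α : Fin (m + n) → ℤ) (x : ℤ) : ℕ :=
  (Finset.univ.filter fun j : Fin (m + n) => m ≤ (j : ℕ) ∧ α j = x).card

/-- `α ∈ ℤ^{m|n}` is antidominant if `a_1 ≤ … ≤ a_m` and `a_{m+1} ≥ … ≥ a_{m+n}`. -/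
def Antidominant (m n : ℕ) (α : Fin (m + n) → ℤ) : Prop :=
  (∀ j k : Fin (m + n), (j : ℕ) ≤ (k : ℕ) → (k : ℕ) < m → α j ≤ α k) ∧
  (∀ j k : Fin (m + n), m ≤ (j : ℕ) → (j : ℕ) ≤ (k : ℕ) → α k ≤ α j)

open List

def stripZeros (l : List Sign) : List Sign := l.filter (· ≠ .zero)

@[simp] theorem stripZeros_nil : stripZeros [] = [] := rfl
@[simp] theorem stripZeros_cons_zero (l : List Sign) :
    stripZeros (.zero :: l) = stripZeros l := rfl
@[simp] theorem stripZeros_cons_plus (l : List Sign) :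
    stripZeros (.plus :: l) = .plus :: stripZeros l := rfl
@[simp] theorem stripZeros_cons_minus (l : List Sign) :
    stripZeros (.minus :: l) = .minus :: stripZeros l := rfl
@[simp] theorem stripZeros_append (l₁ l₂ : List Sign) :
    stripZeros (l₁ ++ l₂) = stripZeros l₁ ++ stripZeros l₂ := filter_append _ _

theorem count_stripZeros {s : Sign} (hs : s ≠ .zero) (l : List Sign) :
    (stripZeros l).count s = l.count s :=
  count_filter (by simpa using hs)

/-- On a word without `0`s this says that the word is `+⋯+-⋯-`, i.e. already reduced. -/
abbrev NoMinusPlus (w : List Sign) : Prop := w.IsChain fun u v => u = .minus → v ≠ .plus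

theorem noMinusPlus_replicate_append (a b : ℕ) :
    NoMinusPlus (replicate a .plus ++ replicate b .minus) := by
  refine (isChain_replicate_of_rel _ (by simp)).append (isChain_replicate_of_rel _ (by simp)) ?_
  intro u hu _ _
  simp only [getLast?_replicate, Option.mem_def, Option.ite_none_left_eq_some,
    Option.some.injEq] at hu
  simp [← hu.2]

theorem eatPlus_eq_none {l : List Sign} (h : (stripZeros l).head? ≠ some .plus) :
    eatPlus l = none := by
  induction l with
  | nil => rfl
  | cons s rest ih => cases s <;> simp_all [eatPlus]

theorem exists_eatPlus_eq_some {l t : List Sign} (h : stripZeros l = .plus :: t) :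
    ∃ l', eatPlus l = some l' ∧ stripZeros l' = t := by
  induction l with
  | nil => simp at h
  | cons s rest ih =>
    cases s with
    | plus => exact ⟨.zero :: rest, rfl, by simpa using h⟩
    | minus => simp at h
    | zero =>
      obtain ⟨l', hl', hs⟩ := ih (by simpa using h)
      exact ⟨.zero :: l', by simp [eatPlus, hl'], by simpa using hs⟩

theorem cancelOne_eq_none {l : List Sign} (h : NoMinusPlus (stripZeros l)) :
    cancelOne l = none := by
  induction l with
  | nil => rfl
  | cons s rest ih =>
    cases s with
    | plus =>
      rw [stripZeros_cons_plus] at h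
      simp [cancelOne, ih h.tail]
    | zero => simp [cancelOne, ih (by simpa using h)]
    | minus =>
      rw [stripZeros_cons_minus] at h
      have hhead : (stripZeros rest).head? ≠ some .plus := fun hp =>
        (isChain_cons.mp h).1 _ hp rfl rfl
      simp [cancelOne, eatPlus_eq_none hhead, ih h.tail]

theorem exists_cancelOne_eq_some {l w t : List Sign}
    (h : stripZeros l = w ++ .minus :: .plus :: t) (hw : NoMinusPlus w) :
    ∃ l', cancelOne l = some l' ∧ stripZeros l' = w ++ t := by
  induction l generalizing w with
  | nil => simp at h
  | cons s rest ih =>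
    cases s with
    | zero =>
      obtain ⟨l', hl', hs⟩ := ih (by simpa using h) hw
      exact ⟨.zero :: l', by simp [cancelOne, hl'], by simpa using hs⟩
    | plus =>
      rcases w with _ | ⟨_ | _ | _, w⟩ <;> simp at h
      obtain ⟨l', hl', hs⟩ := ih h hw.tail
      exact ⟨.plus :: l', by simp [cancelOne, hl'], by simpa using hs⟩
    | minus =>
      rcases w with _ | ⟨_ | _ | _, w⟩ <;> simp at h
      · obtain ⟨l', hl', hs⟩ := exists_eatPlus_eq_some h
        exact ⟨.zero :: l', by simp [cancelOne, hl'], by simpa using hs⟩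
      · have hhead : (stripZeros rest).head? ≠ some .plus := by
          rw [h]
          rcases w with _ | ⟨_ | _ | _, w⟩
          · simp
          · exact absurd rfl ((isChain_cons_cons.mp hw).1 rfl)
          all_goals simp
        obtain ⟨l', hl', hs⟩ := ih h hw.tail
        exact ⟨.minus :: l', by simp [cancelOne, eatPlus_eq_none hhead, hl'], by simpa using hs⟩

theorem reduceIter_eq_self {l : List Sign} (h : NoMinusPlus (stripZeros l)) (k : ℕ) :
    reduceIter k l = l := by
  cases k <;> simp [reduceIter, cancelOne_eq_none h]

theorem stripZeros_reduceIter {a d : ℕ} : ∀ (k b c : ℕ) (l : List Sign),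
    stripZeros l =
      replicate a .plus ++ replicate b .minus ++ replicate c .plus ++ replicate d .minus →
    min b c ≤ k →
    stripZeros (reduceIter k l) =
      replicate a .plus ++ replicate (b - c) .minus ++ replicate (c - b) .plus ++ replicate d .minus
  | k, 0, c, l, h, _ => by
    have hl : stripZeros l = replicate (a + c) .plus ++ replicate d .minus := by
      rw [h, replicate_add]; simp
    rw [reduceIter_eq_self (hl ▸ noMinusPlus_replicate_append _ _), h]
    simp
  | k, b, 0, l, h, _ => by
    have hl : stripZeros l = replicate a .plus ++ replicate (b + d) .minus := by
      rw [h, replicate_add]; simp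
    rw [reduceIter_eq_self (hl ▸ noMinusPlus_replicate_append _ _), h]
    simp
  | 0, b + 1, c + 1, _, _, hk => by omega
  | k + 1, b + 1, c + 1, l, h, hk => by
    have h' : stripZeros l = (replicate a .plus ++ replicate b .minus) ++
        .minus :: .plus :: (replicate c .plus ++ replicate d .minus) := by
      rw [h, replicate_succ', replicate_succ (n := c)]; simp
    obtain ⟨l', hl', hs⟩ := exists_cancelOne_eq_some h' (noMinusPlus_replicate_append a b)
    rw [reduceIter, hl', Nat.add_sub_add_right, Nat.add_sub_add_right]
    exact stripZeros_reduceIter (a := a) (d := d) k b c l' (hs.trans (by simp)) (by omega)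

def valueSign {β : Type*} [DecidableEq β] (p q v : β) : Sign :=
  if v = p then .plus else if v = q then .minus else .zero

theorem signOf_eq (m n : ℕ) (i : ℤ) (α : Fin (m + n) → ℤ) (j : Fin (m + n)) :
    signOf m n i α j =
      if (j : ℕ) < m then valueSign i (i + 1) (α j) else valueSign (i + 1) i (α j) :=
  rfl

theorem stripZeros_map_valueSign {β : Type*} [DecidableEq β] {p q : β} (hpq : p ≠ q) {L : List β}
    (hL : L.Pairwise fun u v => u = q → v ≠ p) :
    stripZeros (L.map (valueSign p q)) =
      replicate (L.count p) .plus ++ replicate (L.count q) .minus := by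
  induction L with
  | nil => rfl
  | cons v t ih =>
    obtain ⟨hv, ht⟩ := pairwise_cons.mp hL
    by_cases hvp : v = p
    · subst hvp
      simp [valueSign, hpq, ih ht, replicate_succ]
    · by_cases hvq : v = q
      · subst hvq
        have hp : t.count p = 0 := count_eq_zero.mpr fun hmem => hv p hmem rfl rfl
        simp [valueSign, hvp, ih ht, hp, replicate_succ]
      · simp [valueSign, hvp, hvq, ih ht]

theorem card_filter_eq_count_ofFn {β : Type*} [DecidableEq β] {N : ℕ} (f : Fin N → β) (b : β) :
    (Finset.univ.filter fun i => f i = b).card = (ofFn f).count b := by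
  simpa using Fin.card_filter_univ_eq_vector_get_eq_count b (List.Vector.ofFn f)

theorem count0_eq_count_ofFn (m n : ℕ) (α : Fin (m + n) → ℤ) (x : ℤ) :
    count0 m n α x = (ofFn fun i : Fin m => α (Fin.castAdd n i)).count x := by
  rw [← card_filter_eq_count_ofFn, count0, Finset.card_filter, Finset.card_filter,
    Fin.sum_univ_add]
  simp

theorem count1_eq_count_ofFn (m n : ℕ) (α : Fin (m + n) → ℤ) (x : ℤ) :
    count1 m n α x = (ofFn fun i : Fin n => α (Fin.natAdd m i)).count x := by
  rw [← card_filter_eq_count_ofFn, count1, Finset.card_filter, Finset.card_filter,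
    Fin.sum_univ_add]
  simp

theorem stripZeros_sigList {m n : ℕ} {α : Fin (m + n) → ℤ} (hα : Antidominant m n α) (i : ℤ) :
    stripZeros (sigList m n i α) =
      replicate (count0 m n α i) .plus ++ replicate (count0 m n α (i + 1)) .minus ++
        replicate (count1 m n α (i + 1)) .plus ++ replicate (count1 m n α i) .minus := by
  have hleft : (ofFn fun k : Fin m => α (Fin.castAdd n k)).Pairwise
      fun u v => u = i + 1 → v ≠ i := pairwise_ofFn.mpr fun j k hjk => by
    have := hα.1 (Fin.castAdd n j) (Fin.castAdd n k) (by simpa using hjk.le) (by simp)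
    omega
  have hright : (ofFn fun k : Fin n => α (Fin.natAdd m k)).Pairwise
      fun u v => u = i → v ≠ i + 1 := pairwise_ofFn.mpr fun j k hjk => by
    have := hα.2 (Fin.natAdd m j) (Fin.natAdd m k) (by simp) (by simpa using hjk.le)
    omega
  have hsplit : sigList m n i α =
      (ofFn fun k : Fin m => α (Fin.castAdd n k)).map (valueSign i (i + 1)) ++
        (ofFn fun k : Fin n => α (Fin.natAdd m k)).map (valueSign (i + 1) i) := by
    rw [sigList, ofFn_add, map_ofFn, map_ofFn]
    congr 2 <;> funext k <;> simp [signOf_eq, Fin.castAdd]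
  rw [hsplit, stripZeros_append, stripZeros_map_valueSign (by omega) hleft,
    stripZeros_map_valueSign (by omega) hright, count0_eq_count_ofFn, count0_eq_count_ofFn,
    count1_eq_count_ofFn, count1_eq_count_ofFn]
  simp only [append_assoc]

theorem stripZeros_redSig {m n : ℕ} {α : Fin (m + n) → ℤ} (hα : Antidominant m n α) (i : ℤ) :
    stripZeros (redSig m n i α) =
      replicate (count0 m n α i) .plus ++
        replicate (count0 m n α (i + 1) - count1 m n α (i + 1)) .minus ++
        replicate (count1 m n α (i + 1) - count0 m n α (i + 1)) .plus ++
        replicate (count1 m n α i) .minus := by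
  have h := stripZeros_sigList hα i
  refine stripZeros_reduceIter _ _ _ _ h ?_
  have hlen : (stripZeros (sigList m n i α)).length ≤ (sigList m n i α).length :=
    length_filter_le _ _
  simp only [h, length_append, length_replicate] at hlen
  omega

theorem epsilon_phi_of_antidominant_general
    (m n : ℕ) (α : Fin (m + n) → ℤ)
    (hα : Antidominant m n α) (x : ℤ) :
    (phiNum m n x α : ℤ) =
        (count0 m n α x : ℤ) +
          max ((count1 m n α (x + 1) : ℤ) - (count0 m n α (x + 1) : ℤ)) 0 ∧
    (epsilonNum m n x α : ℤ) =
        (count1 m n α x : ℤ) +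
          max ((count0 m n α (x + 1) : ℤ) - (count1 m n α (x + 1) : ℤ)) 0 := by
  have h := stripZeros_redSig hα x
  have hφ := congrArg (count Sign.plus) h
  have hε := congrArg (count Sign.minus) h
  rw [count_stripZeros (by decide)] at hφ hε
  simp only [count_append, count_replicate_self, count_replicate, beq_iff_eq, reduceCtorEq,
    ↓reduceIte, add_zero, zero_add] at hφ hε
  rw [phiNum, epsilonNum, hφ, hε]
  omega

/-- For antidominant `α` and every `x ∈ ℤ`:
`φ_x(α) = α_0(x) + max(α_1(x+1) − α_0(x+1), 0)` and
`ε_x(α) = α_1(x) + max(α_0(x+1) − α_1(x+1), 0)`. -/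
theorem epsilon_phi_of_antidominant
    (m n : ℕ) (hm : 1 ≤ m) (hn : 1 ≤ n) (α : Fin (m + n) → ℤ)
    (hα : Antidominant m n α) (x : ℤ) :
    (phiNum m n x α : ℤ) =
        (count0 m n α x : ℤ) +
          max ((count1 m n α (x + 1) : ℤ) - (count0 m n α (x + 1) : ℤ)) 0 ∧
    (epsilonNum m n x α : ℤ) =
        (count1 m n α x : ℤ) +
          max ((count0 m n α (x + 1) : ℤ) - (count1 m n α (x + 1) : ℤ)) 0 :=
  epsilon_phi_of_antidominant_general m n α hα x
end

section
/- Let x = (x_1,…,x_m) ∈ ℤ^m be such that either all entries of x are pairwise distinct, or there is exactly one pair of positions i₀ < j₀ with x_{i₀} = x_{j₀} (all other pairs of entries being distinct). Let y = (y_1,…,y_m) ∈ ℤ^m satisfy y_k ∈ {x_k − 1, x_k} for every k. Then there exists a permutation σ of {1,…,m} such that both (x_{σ(1)},…,x_{σ(m)}) and (y_{σ(1)},…,y_{σ(m)}) are weakly decreasing. (This is the combinatorial content of Lemma 7.15: for κ regular or with a unique singular pair, some w ∈ W makes both w^{-1}·κ and w^{-1}·κ^{ad} dominant; the hypothesis y_k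 ∈ {x_k − 1, x_k} encodes that each coefficient of κ^{ad}+ρ₀ equals the corresponding coefficient of κ+ρ₀ or is one less, as follows from the procedure of odd reflections.) -/
/-! Sort the positions lexicographically by `(x k, y k)`. Since `y k ∈ {x k - 1, x k}`, a strict
decrease in `x` forces a weak decrease in `y`, so this single order makes both tuples
decreasing. -/

theorem exists_perm_monotone_monotone {α β : Type*} [LinearOrder α] [LinearOrder β] {n : ℕ}
    (f : Fin n → α) (g : Fin n → β) (h : ∀ i j, f i < f j → g i ≤ g j) :
    ∃ σ : Equiv.Perm (Fin n), Monotone (f ∘ σ) ∧ Monotone (g ∘ σ) := by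
  set σ := Tuple.sort fun k => toLex (f k, g k)
  have hσ : ∀ ⦃a b⦄, a ≤ b → toLex (f (σ a), g (σ a)) ≤ toLex (f (σ b), g (σ b)) :=
    fun _ _ hab => Tuple.monotone_sort (fun k => toLex (f k, g k)) hab
  refine ⟨σ, fun a b hab => Prod.Lex.monotone_fst _ _ (hσ hab), fun a b hab => ?_⟩
  rcases Prod.Lex.le_iff.mp (hσ hab) with hf | ⟨-, hg⟩
  · exact h _ _ hf
  · exact hg

theorem exists_perm_antitone_antitone {α β : Type*} [LinearOrder α] [LinearOrder β] {n : ℕ}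
    (f : Fin n → α) (g : Fin n → β) (h : ∀ i j, f i < f j → g i ≤ g j) :
    ∃ σ : Equiv.Perm (Fin n), Antitone (f ∘ σ) ∧ Antitone (g ∘ σ) := by
  obtain ⟨σ, hf, hg⟩ :=
    exists_perm_monotone_monotone (OrderDual.toDual ∘ f) (OrderDual.toDual ∘ g) fun i j hij =>
      h j i hij
  exact ⟨σ, monotone_toDual_comp_iff.mp hf, monotone_toDual_comp_iff.mp hg⟩

theorem exists_perm_antitone_of_both_general
    (m : ℕ) (x y : Fin m → ℤ)
    (hy : ∀ k : Fin m, y k = x k - 1 ∨ y k = x k) :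
    ∃ σ : Equiv.Perm (Fin m), Antitone (x ∘ σ) ∧ Antitone (y ∘ σ) :=
  exists_perm_antitone_antitone x y fun i j hij => by
    rcases hy i with hi | hi <;> rcases hy j with hj | hj <;> omega

/-- Let `x ∈ ℤ^m` have pairwise distinct entries, or have exactly
one pair of positions `i₀ < j₀` with `x i₀ = x j₀` (all other pairs of entries
distinct). Let `y ∈ ℤ^m` satisfy `y k ∈ {x k − 1, x k}` for every `k`. Then some
permutation `σ` of the positions makes both `x ∘ σ` and `y ∘ σ` weakly decreasing. -/
theorem exists_perm_antitone_of_both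
    (m : ℕ) (x y : Fin m → ℤ)
    (hx : Function.Injective x ∨
      ∃ i₀ j₀ : Fin m, i₀ < j₀ ∧ x i₀ = x j₀ ∧
        ∀ i j : Fin m, i < j → x i = x j → i = i₀ ∧ j = j₀)
    (hy : ∀ k : Fin m, y k = x k - 1 ∨ y k = x k) :
    ∃ σ : Equiv.Perm (Fin m), Antitone (x ∘ σ) ∧ Antitone (y ∘ σ) :=
  exists_perm_antitone_of_both_general m x y hy
end

section
/- Let m ≥ 2 and fix i with 1 ≤ i ≤ m − 1. The number of standard Young tableaux with m boxes in which the entry i+1 lies in a strictly lower row than the entry i equals exactly half of the total number of standard Young tableaux with m boxes. (This is the counting identity proved in Lemma 7.27, giving |X_i^{(m)}| = |X_0^{(m)}|/2.) -/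
/-- A standard Young tableau on the Young diagram `μ`: a filling of the cells of `μ`
by the numbers `1, …, μ.card`, bijectively, strictly increasing along rows (left to
right) and down columns (top to bottom); cells are `(row, column)` with rows indexed
from the top, and the entry is `0` outside `μ`. -/
structure SYT (μ : YoungDiagram) where
  entry : ℕ × ℕ → ℕ
  zeros' : ∀ p : ℕ × ℕ, p ∉ μ → entry p = 0
  bijOn' : Set.BijOn entry (μ.cells : Set (ℕ × ℕ)) (Set.Icc 1 μ.card)
  row_lt' : ∀ i j1 j2 : ℕ, j1 < j2 → (i, j2) ∈ μ → entry (i, j1) < entry (i, j2)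
  col_lt' : ∀ i1 i2 j : ℕ, i1 < i2 → (i2, j) ∈ μ → entry (i1, j) < entry (i2, j)

/-- `T` has the entry `i + 1` in a strictly lower row than the entry `i`
(rows are indexed from the top). -/
def SYT.Descent {μ : YoungDiagram} (T : SYT μ) (i : ℕ) : Prop :=
  ∃ p q : ℕ × ℕ, p ∈ μ ∧ q ∈ μ ∧ T.entry p = i ∧ T.entry q = i + 1 ∧ p.1 < q.1

/- ### Auxiliary material -/

theorem YoungDiagram.card_transpose (μ : YoungDiagram) : μ.transpose.card = μ.card := by
  apply Finset.card_bij (fun p _ => p.swap)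
  · intro p hp
    simpa [YoungDiagram.mem_cells] using (YoungDiagram.mem_transpose.mp (by simpa using hp))
  · intro p hp q hq h
    exact Prod.swap_injective h
  · intro q hq
    refine ⟨q.swap, ?_, by simp⟩
    simp only [YoungDiagram.mem_cells, YoungDiagram.mem_transpose, Prod.swap_swap]
    simpa using hq

/-- The transpose of a standard Young tableau. -/
def SYT.trans {μ : YoungDiagram} (T : SYT μ) : SYT μ.transpose where
  entry p := T.entry p.swap
  zeros' p hp := T.zeros' p.swap (fun h => hp (YoungDiagram.mem_transpose.mpr h))
  bijOn' := by
    rw [YoungDiagram.card_transpose]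
    have hswap : Set.BijOn Prod.swap (μ.transpose.cells : Set (ℕ × ℕ)) (μ.cells : Set (ℕ × ℕ)) := by
      refine ⟨?_, fun p _ q _ h => Prod.swap_injective h, ?_⟩
      · intro p hp
        simpa [YoungDiagram.mem_cells] using (YoungDiagram.mem_transpose.mp (by simpa using hp))
      · intro q hq
        refine ⟨q.swap, ?_, by simp⟩
        simp only [Finset.coe_sort_coe, Set.mem_setOf_eq, Finset.mem_coe,
          YoungDiagram.mem_cells, YoungDiagram.mem_transpose, Prod.swap_swap]
        simpa using hq
    exact T.bijOn'.comp hswap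
  row_lt' i j1 j2 h hq := T.col_lt' j1 j2 i h (YoungDiagram.mem_transpose.mp hq)
  col_lt' i1 i2 j h hq := T.row_lt' j i1 i2 h (YoungDiagram.mem_transpose.mp hq)

theorem SYT.ext' {μ : YoungDiagram} {T S : SYT μ} (h : T.entry = S.entry) : T = S := by
  cases T; cases S; cases h; rfl

theorem SYT.heq' {μ ν : YoungDiagram} (h : μ = ν) {T : SYT μ} {S : SYT ν}
    (he : T.entry = S.entry) : HEq T S := by
  subst h; exact heq_of_eq (SYT.ext' he)

theorem SYT.sigma_trans_trans (x : Σ μ : YoungDiagram, SYT μ) :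
    (⟨x.1.transpose.transpose, x.2.trans.trans⟩ : Σ μ : YoungDiagram, SYT μ) = x := by
  obtain ⟨μ, T⟩ := x
  exact Sigma.ext (μ.transpose_transpose) (SYT.heq' μ.transpose_transpose (by
    funext p; simp [SYT.trans]))

theorem SYT.entry_mem_Icc {μ : YoungDiagram} (T : SYT μ) {p : ℕ × ℕ} (hp : p ∈ μ) :
    T.entry p ∈ Set.Icc 1 μ.card :=
  T.bijOn'.mapsTo (by simpa [YoungDiagram.mem_cells] using hp)

/-- a tableau and its transpose cannot both have a descent at `i`. -/
theorem SYT.not_descent_trans {μ : YoungDiagram} (T : SYT μ) (i : ℕ)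
    (h : T.Descent i) : ¬ T.trans.Descent i := by
  rintro ⟨p', q', hp', hq', hpi', hqi', hlt'⟩
  obtain ⟨p, q, hp, hq, hpi, hqi, hlt⟩ := h
  have hps : p'.swap = p := by
    apply T.bijOn'.injOn (by simpa using YoungDiagram.mem_transpose.mp hp')
      (by simpa using hp)
    rw [hpi]; exact hpi'
  have hqs : q'.swap = q := by
    apply T.bijOn'.injOn (by simpa using YoungDiagram.mem_transpose.mp hq')
      (by simpa using hq)
    rw [hqi]; exact hqi'
  have hc : p.2 < q.2 := by
    have : p'.1 = p.2 := by rw [← hps]; rfl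
    have h2 : q'.1 = q.2 := by rw [← hqs]; rfl
    omega
  have hmid : (q.1, p.2) ∈ μ := μ.up_left_mem le_rfl hc.le (by simpa using hq)
  have h1 : T.entry (p.1, p.2) < T.entry (q.1, p.2) := T.col_lt' p.1 q.1 p.2 hlt hmid
  have h2 : T.entry (q.1, p.2) < T.entry (q.1, q.2) := T.row_lt' q.1 p.2 q.2 hc
    (by simpa using hq)
  rw [Prod.mk.eta, hpi] at h1
  rw [Prod.mk.eta, hqi] at h2
  omega

/-- if a tableau has no descent at `i` (with `i, i+1` in range), its transpose does. -/
theorem SYT.descent_trans_of_not {μ : YoungDiagram} (T : SYT μ) (i : ℕ)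
    (hi1 : 1 ≤ i) (hi2 : i + 1 ≤ μ.card) (h : ¬ T.Descent i) : T.trans.Descent i := by
  obtain ⟨p, hp, hpi⟩ := T.bijOn'.surjOn (a := i) (by constructor <;> omega)
  obtain ⟨q, hq, hqi⟩ := T.bijOn'.surjOn (a := i + 1) (by constructor <;> omega)
  have hp' : p ∈ μ := by simpa using hp
  have hq' : q ∈ μ := by simpa using hq
  have hne : p ≠ q := by rintro rfl; omega
  have h1 : ¬ (p.1 < q.1) := fun hc => h ⟨p, q, hp', hq', hpi, hqi, hc⟩
  have hc : p.2 < q.2 := by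
    by_contra hc2
    push_neg at hc2  -- q.2 ≤ p.2
    have hm : (p.1, q.2) ∈ μ := μ.up_left_mem le_rfl hc2 (by simpa using hp')
    have h2 : T.entry (q.1, q.2) ≤ T.entry (p.1, q.2) := by
      rcases lt_or_eq_of_le (le_of_not_gt h1) with hlt | heq
      · exact (T.col_lt' q.1 p.1 q.2 hlt hm).le
      · rw [heq]
    have h3 : T.entry (p.1, q.2) ≤ T.entry (p.1, p.2) := by
      rcases lt_or_eq_of_le hc2 with hlt | heq
      · exact (T.row_lt' p.1 q.2 p.2 hlt (by simpa using hp')).le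
      · rw [heq]
    rw [Prod.mk.eta, hqi] at h2
    rw [Prod.mk.eta, hpi] at h3
    omega
  refine ⟨p.swap, q.swap, ?_, ?_, ?_, ?_, ?_⟩
  · rw [YoungDiagram.mem_transpose, Prod.swap_swap]; exact hp'
  · rw [YoungDiagram.mem_transpose, Prod.swap_swap]; exact hq'
  · show T.entry p.swap.swap = i; rw [Prod.swap_swap]; exact hpi
  · show T.entry q.swap.swap = i + 1; rw [Prod.swap_swap]; exact hqi
  · exact hc

/-- For `m ≥ 2` and `1 ≤ i ≤ m − 1`, the number of standard Young
tableaux with `m` boxes (over all shapes) in which the entry `i + 1` lies in a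
strictly lower row than the entry `i` is exactly half of the total number of
standard Young tableaux with `m` boxes. -/
theorem card_descent_SYT_eq_half
    (m : ℕ) (hm : 2 ≤ m) (i : ℕ) (hi1 : 1 ≤ i) (hi2 : i ≤ m - 1) :
    2 * Nat.card {x : Σ μ : YoungDiagram, SYT μ // x.1.card = m ∧ x.2.Descent i} =
      Nat.card {x : Σ μ : YoungDiagram, SYT μ // x.1.card = m} := by
  classical
  set α := {x : Σ μ : YoungDiagram, SYT μ // x.1.card = m} with hα
  set P : α → Prop := fun x => x.1.2.Descent i with hP
  -- identify the LHS subtype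
  have e0 : {x : Σ μ : YoungDiagram, SYT μ // x.1.card = m ∧ x.2.Descent i} ≃ {x : α // P x} :=
    (Equiv.subtypeSubtypeEquivSubtypeInter _ _).symm
  -- the descent-flipping involution
  have hcard : ∀ x : α, x.1.1.transpose.card = m := fun x => by
    rw [YoungDiagram.card_transpose]; exact x.2
  have hiμ : ∀ x : α, i + 1 ≤ x.1.1.card := fun x => by rw [x.2]; omega
  have e1 : {x : α // P x} ≃ {x : α // ¬ P x} :=
    { toFun := fun y => ⟨⟨⟨y.1.1.1.transpose, y.1.1.2.trans⟩, hcard y.1⟩, by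
        intro hc
        have := SYT.not_descent_trans y.1.1.2 i y.2
        exact this hc⟩
      invFun := fun y => ⟨⟨⟨y.1.1.1.transpose, y.1.1.2.trans⟩, hcard y.1⟩, by
        exact SYT.descent_trans_of_not y.1.1.2 i hi1 (hiμ y.1) y.2⟩
      left_inv := fun y => by
        apply Subtype.ext; apply Subtype.ext
        exact SYT.sigma_trans_trans y.1.1
      right_inv := fun y => by
        apply Subtype.ext; apply Subtype.ext
        exact SYT.sigma_trans_trans y.1.1 }
  rw [Nat.card_congr e0]
  have esum : α ≃ {x : α // P x} ⊕ {x : α // ¬ P x} := (Equiv.sumCompl P).symm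
  by_cases hfin : Finite {x : α // P x}
  · have hfin2 : Finite {x : α // ¬ P x} := Finite.of_equiv _ e1
    rw [Nat.card_congr esum, Nat.card_sum, ← Nat.card_congr e1]
    ring
  · rw [not_finite_iff_infinite] at hfin
    have : Infinite α := Infinite.of_injective (fun x : {x : α // P x} => x.1) Subtype.val_injective
    rw [@Nat.card_eq_zero_of_infinite {x : α // P x} hfin,
      @Nat.card_eq_zero_of_infinite α this]
end
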